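/- With X, {e_k; f_k}, Q_n, Φ_r as above: ‖Φ_r(x)‖ < 2r for every x ∈ X. -/

import Mathlib

open Filter Finset Topology

/-- The tail projection `Q_{n+1} = I - P_n` associated to a Schauder basis system,
where `P_n x = ∑_{k<n} f_k(x) e_k`.  Thus `tailProj f e n` is the paper's `Q_{n+1}`
and also its `R_n`. -/
noncomputable def tailProj {X : Type*} [NormedAddCommGroup X] [NormedSpace ℝ X]
    (f : ℕ → X →L[ℝ] ℝ) (e : ℕ → X) (n : ℕ) : X →L[ℝ] X :=
  ContinuousLinearMap.id ℝ X - ∑ k ∈ Finset.range n, (f k).smulRight (e k)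

/-- The piecewise-linear cutoff function `φ_r`: equal to `1` on `[-r, r]`,
`0` outside `(-2r, 2r)`, and `2 - |t|/r` in between. -/
noncomputable def phi (r t : ℝ) : ℝ :=
  if |t| ≤ r then 1 else if |t| ≤ 2 * r then 2 - |t| / r else 0

/-!
Write `v k = tailProj f e k x`, so that `f_k(x) e_k = v k - v (k+1)`. Applying the tail
projection of index `k+1` (which has norm `≤ 1`) to `v k` gives `v (k+1)`, so the norms `‖v k‖`
decrease to `0`. Hence the coefficients `c k = φ_r(‖v k‖)` increase, lie in `[0, 1]`, and
`c k ≠ 0` forces `‖v k‖ < 2r`, i.e. `‖v k‖ ≤ ‖v n‖` for the first index `n` with `‖v n‖ < 2r`.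
Summing by parts, each partial sum of `Φ_r(x)` is, up to the vanishing term `c m • v m`, a
combination of the `v k` with `c k ≠ 0` whose weights are nonnegative and add up to at most `1`;
so `‖Φ_r(x)‖ ≤ ‖v n‖ < 2r`.
-/

section Cutoff

lemma phi_nonneg (r t : ℝ) : 0 ≤ phi r t := by
  unfold phi
  split_ifs with h₁ h₂
  · exact zero_le_one
  · have : |t| / r ≤ 2 := by rw [div_le_iff₀ (by linarith)]; linarith
    linarith
  · exact le_rfl

lemma phi_le_one (r t : ℝ) : phi r t ≤ 1 := by
  unfold phi
  split_ifs with h₁ h₂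
  · exact le_rfl
  · have : 1 ≤ |t| / r := by rw [le_div_iff₀ (by linarith)]; linarith
    linarith
  · exact zero_le_one

lemma phi_eq_zero {r t : ℝ} (hr : 0 < r) (h : 2 * r ≤ |t|) : phi r t = 0 := by
  unfold phi
  split_ifs with h₁ h₂
  · linarith
  · rw [le_antisymm h₂ h]
    field_simp
    norm_num
  · rfl

lemma phi_le_phi_of_abs_le {r s t : ℝ} (hst : |s| ≤ |t|) : phi r t ≤ phi r s := by
  unfold phi
  split_ifs with h₁ h₂ h₃ h₄ h₅ <;> try linarith
  · have : 1 ≤ |t| / r := by rw [le_div_iff₀ (by linarith)]; linarith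
    linarith
  · have : |s| / r ≤ |t| / r := by gcongr; linarith
    linarith
  · have : |s| / r ≤ 2 := by rw [div_le_iff₀ (by linarith)]; linarith
    linarith

end Cutoff

section SummationByParts

variable {X : Type*} [NormedAddCommGroup X] [NormedSpace ℝ X]

/-- The left-hand side equals `c 0 • v 0 + ∑ k < m, (c (k+1) - c k) • v (k+1)`, a combination
of the `v k` with `c k ≠ 0` with nonnegative weights of total `c m`. -/
lemma norm_sum_smul_sub_add_smul_le (v : ℕ → X) {c : ℕ → ℝ} {B : ℝ}
    (hc₀ : ∀ k, 0 ≤ c k) (hc : Monotone c) (hB : ∀ k, c k ≠ 0 → ‖v k‖ ≤ B) (m : ℕ) :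
    ‖∑ k ∈ range m, c k • (v k - v (k + 1)) + c m • v m‖ ≤ c m * B := by
  induction m with
  | zero =>
    rw [range_zero, sum_empty, zero_add, norm_smul, Real.norm_of_nonneg (hc₀ 0)]
    rcases eq_or_ne (c 0) 0 with h | h
    · simp [h]
    · exact mul_le_mul_of_nonneg_left (hB 0 h) (hc₀ 0)
  | succ m ih =>
    have hstep : ‖(c (m + 1) - c m) • v (m + 1)‖ ≤ (c (m + 1) - c m) * B := by
      have hδ : 0 ≤ c (m + 1) - c m := sub_nonneg.2 (hc m.le_succ)
      rw [norm_smul, Real.norm_of_nonneg hδ]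
      rcases hδ.eq_or_lt with h | h
      · simp [← h]
      · exact mul_le_mul_of_nonneg_left (hB _ (by linarith [hc₀ m])) hδ
    calc ‖∑ k ∈ range (m + 1), c k • (v k - v (k + 1)) + c (m + 1) • v (m + 1)‖
        = ‖(∑ k ∈ range m, c k • (v k - v (k + 1)) + c m • v m)
            + (c (m + 1) - c m) • v (m + 1)‖ := by
          congr 1
          rw [sum_range_succ, smul_sub, sub_smul]
          abel
      _ ≤ c m * B + (c (m + 1) - c m) * B := (norm_add_le _ _).trans (add_le_add ih hstep)
      _ = c (m + 1) * B := by ring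

lemma norm_le_of_tendsto_sum_smul_sub {v : ℕ → X} {c : ℕ → ℝ} {B : ℝ} {s : X}
    (hv : Tendsto v atTop (𝓝 0)) (hc₀ : ∀ k, 0 ≤ c k) (hc₁ : ∀ k, c k ≤ 1)
    (hc : Monotone c) (hB₀ : 0 ≤ B) (hB : ∀ k, c k ≠ 0 → ‖v k‖ ≤ B)
    (hs : Tendsto (fun m => ∑ k ∈ range m, c k • (v k - v (k + 1))) atTop (𝓝 s)) :
    ‖s‖ ≤ B := by
  have hpartial : ∀ m, ‖∑ k ∈ range m, c k • (v k - v (k + 1))‖ ≤ B + ‖v m‖ := by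
    intro m
    have htail : ‖c m • v m‖ ≤ ‖v m‖ := by
      rw [norm_smul, Real.norm_of_nonneg (hc₀ m)]
      exact mul_le_of_le_one_left (norm_nonneg _) (hc₁ m)
    calc ‖∑ k ∈ range m, c k • (v k - v (k + 1))‖
        ≤ ‖∑ k ∈ range m, c k • (v k - v (k + 1)) + c m • v m‖ + ‖c m • v m‖ :=
          norm_le_add_norm_add _ _
      _ ≤ c m * B + ‖v m‖ :=
          add_le_add (norm_sum_smul_sub_add_smul_le v hc₀ hc hB m) htail
      _ ≤ B + ‖v m‖ := by gcongr; exact mul_le_of_le_one_left hB₀ (hc₁ m)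
  have hbound : Tendsto (fun m => B + ‖v m‖) atTop (𝓝 (B + 0)) :=
    tendsto_const_nhds.add (by simpa using hv.norm)
  simpa using le_of_tendsto_of_tendsto' hs.norm hbound hpartial

end SummationByParts

section TailProjection

variable {X : Type*} [NormedAddCommGroup X] [NormedSpace ℝ X] {f : ℕ → X →L[ℝ] ℝ} {e : ℕ → X}

lemma tailProj_apply (n : ℕ) (x : X) :
    tailProj f e n x = x - ∑ k ∈ range n, f k x • e k := by
  simp [tailProj]

lemma tailProj_apply_sub_succ (n : ℕ) (x : X) :
    tailProj f e n x - tailProj f e (n + 1) x = f n x • e n := by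
  rw [tailProj_apply, tailProj_apply, sum_range_succ]
  abel

lemma tendsto_tailProj_apply (hexp : ∀ x : X,
      Tendsto (fun n => ∑ k ∈ range n, f k x • e k) atTop (𝓝 x)) (x : X) :
    Tendsto (fun n => tailProj f e n x) atTop (𝓝 0) := by
  simpa [tailProj_apply] using (tendsto_const_nhds (x := x)).sub (hexp x)

variable (hbi : ∀ k j, f k (e j) = if k = j then (1 : ℝ) else 0)
include hbi

lemma tailProj_apply_basis {n j : ℕ} (hj : j < n) : tailProj f e n (e j) = 0 := by
  simp [tailProj_apply, hbi, ite_smul, sum_ite_eq', mem_range.2 hj]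

lemma tailProj_tailProj_of_le {m n : ℕ} (hmn : m ≤ n) (x : X) :
    tailProj f e n (tailProj f e m x) = tailProj f e n x := by
  rw [tailProj_apply m x, map_sub, map_sum, sub_eq_self]
  refine sum_eq_zero fun k hk => ?_
  rw [map_smul, tailProj_apply_basis hbi ((mem_range.1 hk).trans_le hmn), smul_zero]

lemma antitone_norm_tailProj_apply (hR : ∀ n, 1 ≤ n → ‖tailProj f e n‖ ≤ 1) (x : X) :
    Antitone fun n => ‖tailProj f e n x‖ := by
  refine antitone_nat_of_succ_le fun n => ?_
  calc ‖tailProj f e (n + 1) x‖ = ‖tailProj f e (n + 1) (tailProj f e n x)‖ := by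
        rw [tailProj_tailProj_of_le hbi n.le_succ]
    _ ≤ ‖tailProj f e (n + 1)‖ * ‖tailProj f e n x‖ := (tailProj f e (n + 1)).le_opNorm _
    _ ≤ ‖tailProj f e n x‖ := mul_le_of_le_one_left (norm_nonneg _) (hR _ n.succ_pos)

end TailProjection

theorem Phi_norm_lt_two_r_general
    {X : Type*} [NormedAddCommGroup X] [NormedSpace ℝ X]
    (e : ℕ → X) (f : ℕ → X →L[ℝ] ℝ)
    (hexp : ∀ x : X, Tendsto (fun n => ∑ k ∈ Finset.range n, f k x • e k) atTop (𝓝 x))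
    (hbi : ∀ k j, f k (e j) = if k = j then (1 : ℝ) else 0)
    (hR : ∀ n, 1 ≤ n → ‖tailProj f e n‖ = 1)
    (r : ℝ) (hr : 0 < r) (Φ : X → X)
    (hΦ : ∀ x : X, Tendsto
      (fun n => ∑ k ∈ Finset.range n, phi r ‖tailProj f e k x‖ • (f k x • e k))
      atTop (𝓝 (Φ x)))
    (x : X) :
    ‖Φ x‖ < 2 * r := by
  set v := fun k => tailProj f e k x
  have hv : Tendsto v atTop (𝓝 0) := tendsto_tailProj_apply hexp x
  have hanti : Antitone fun k => ‖v k‖ :=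
    antitone_norm_tailProj_apply hbi (fun n hn => (hR n hn).le) x
  have hex : ∃ n, ‖v n‖ < 2 * r :=
    (hv.norm.eventually (gt_mem_nhds (by rw [norm_zero]; linarith))).exists
  have hsupport : ∀ k, phi r ‖v k‖ ≠ 0 → ‖v k‖ ≤ ‖v (Nat.find hex)‖ := by
    intro k hk
    refine hanti (Nat.find_le ?_)
    by_contra! h
    exact hk (phi_eq_zero hr (by rwa [abs_norm]))
  have hs : Tendsto (fun m => ∑ k ∈ range m, phi r ‖v k‖ • (v k - v (k + 1))) atTop
      (𝓝 (Φ x)) := by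
    simpa only [v, tailProj_apply_sub_succ] using hΦ x
  calc ‖Φ x‖ ≤ ‖v (Nat.find hex)‖ :=
        norm_le_of_tendsto_sum_smul_sub hv (fun k => phi_nonneg _ _) (fun k => phi_le_one _ _)
          (fun k l hkl => phi_le_phi_of_abs_le (by simpa using hanti hkl)) (norm_nonneg _)
          hsupport hs
    _ < 2 * r := Nat.find_spec hex

/-- `‖Φ_r(x)‖ < 2r` for every `x ∈ X`. -/
theorem Phi_norm_lt_two_r
    {X : Type*} [NormedAddCommGroup X] [NormedSpace ℝ X] [CompleteSpace X]
    (e : ℕ → X) (f : ℕ → X →L[ℝ] ℝ)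
    (hexp : ∀ x : X, Tendsto (fun n => ∑ k ∈ Finset.range n, f k x • e k) atTop (𝓝 x))
    (hbi : ∀ k j, f k (e j) = if k = j then (1 : ℝ) else 0)
    (hR : ∀ n, 1 ≤ n → ‖tailProj f e n‖ = 1)
    (r : ℝ) (hr : 0 < r) (Φ : X → X)
    (hΦ : ∀ x : X, Tendsto
      (fun n => ∑ k ∈ Finset.range n, phi r ‖tailProj f e k x‖ • (f k x • e k))
      atTop (𝓝 (Φ x)))
    (x : X) :
    ‖Φ x‖ < 2 * r :=
  Phi_norm_lt_two_r_general e f hexp hbi hR r hr Φ hΦ x
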